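/- arXiv:1002.1357 — 2 statements merged into one kernel-verified Lean document; each statement's English description precedes it below -/
import Mathlib

section
/- Let $g_{00}, g_{01}, g_{11} : \mathbb{R}^{12} \to \mathbb{R}$ be the induced-metric coefficients of the string system and let $\lambda_- = \dfrac{-g_{01} - \sqrt{g_{01}^2 - g_{00}g_{11}}}{g_{11}}$, viewed as a smooth function of the state $U \in \mathbb{R}^{12}$ on the region where $g_{11} \neq 0$ and $g_{00}g_{11} - g_{01}^2 < 0$. For each of the right eigenvectors $r_i = (0,0,0,0,-\lambda_- e_{i-4}, e_{i-4})^T$ ($i = 5,6,7,8$) one has $\nabla \lambda_- \cdot r_i = -\lambda_- \dfrac{\partial \lambda_-}{\partial U^i} + \dfrac{\partial \lambda_-}{\partial U^{i+4}} = 0$, i.e. the characteristic field $\lambda_-$ is linearly degenerate in the sense of Lax. -/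
open Real

/-- Spatial Euclidean inner product of the spatial parts (indices 1,2,3) of
four-vectors `u v : Fin 4 → ℝ`. -/
noncomputable def spInner (u v : Fin 4 → ℝ) : ℝ :=
  ∑ i : Fin 3, u i.succ * v i.succ

/-- `r = |u|`, the Euclidean norm of the spatial part. -/
noncomputable def spNorm (u : Fin 4 → ℝ) : ℝ := Real.sqrt (spInner u u)

/-- The Schwarzschild bilinear form (in Cartesian coordinates) evaluated on the
pair of four-vectors `(v, w)` at spatial position given by the spatial part of `u`. -/
noncomputable def schwForm (m : ℝ) (u v w : Fin 4 → ℝ) : ℝ :=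
  -((spNorm u - 2 * m) / spNorm u) * (v 0 * w 0) + spInner v w
    + (2 * m / ((spNorm u) ^ 2 * (spNorm u - 2 * m))) * (spInner u v * spInner u w)

/-- Induced metric coefficients as functions of the state `U = (u, v, w)`. -/
noncomputable def g00 (m : ℝ) (U : (Fin 4 → ℝ) × (Fin 4 → ℝ) × (Fin 4 → ℝ)) : ℝ :=
  schwForm m U.1 U.2.1 U.2.1
noncomputable def g01 (m : ℝ) (U : (Fin 4 → ℝ) × (Fin 4 → ℝ) × (Fin 4 → ℝ)) : ℝ :=
  schwForm m U.1 U.2.1 U.2.2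
noncomputable def g11 (m : ℝ) (U : (Fin 4 → ℝ) × (Fin 4 → ℝ) × (Fin 4 → ℝ)) : ℝ :=
  schwForm m U.1 U.2.2 U.2.2

/-- The characteristic speed `λ₋` as a function of the state. -/
noncomputable def lamMinus (m : ℝ) (U : (Fin 4 → ℝ) × (Fin 4 → ℝ) × (Fin 4 → ℝ)) : ℝ :=
  (-g01 m U - Real.sqrt ((g01 m U) ^ 2 - g00 m U * g11 m U)) / g11 m U

/-! Along the line `t ↦ U + t • rᵢ` the position `u` is fixed, so the metric is one symmetric
bilinear form `G`, and `g₀₀ + 2 g₀₁ λ + g₁₁ λ² = G (v + λ w) (v + λ w)`. With `λ = λ₋(U)` the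
vector `v + λ w` is `G`-isotropic and does not move along the line, so `λ₋(U)` stays a root of
the quadratic; the sign of `g₀₁ + λ g₁₁ = G (v + λ w) w`, negative at `t = 0`, selects the root
`λ₋`, so by continuity `λ₋` is constant near `U` along the line and its derivative in the
direction `rᵢ` vanishes. -/

open Filter Topology

theorem fderiv_apply_eq_zero_of_eventually_const_on_line {𝕜 E F : Type*}
    [NontriviallyNormedField 𝕜] [NormedAddCommGroup E] [NormedSpace 𝕜 E]
    [NormedAddCommGroup F] [NormedSpace 𝕜 F] {f : E → F} {x d : E}
    (h : ∀ᶠ t in 𝓝 (0 : 𝕜), f (x + t • d) = f x) : fderiv 𝕜 f x d = 0 := by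
  by_cases hf : DifferentiableAt 𝕜 f x
  · have hconst : HasLineDerivAt 𝕜 f 0 x d :=
      (hasDerivAt_const (0 : 𝕜) (f x)).congr_of_eventuallyEq h
    exact (hf.hasFDerivAt.hasLineDerivAt d).unique hconst
  · simp [fderiv_zero_of_not_differentiableAt hf]

theorem neg_sub_sqrt_div_eq_of_root {a b c x : ℝ} (hc : c ≠ 0)
    (hx : a + 2 * b * x + c * x ^ 2 = 0) (hneg : b + c * x < 0) : (-b - √(b ^ 2 - a * c)) / c = x := by
  have hdisc : b ^ 2 - a * c = (b + c * x) ^ 2 := by linear_combination (-c) * hx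
  rw [hdisc, Real.sqrt_sq_eq_abs, abs_of_neg hneg]
  field_simp
  ring

namespace LinearMap.BilinForm

variable {V : Type*} [AddCommGroup V] [Module ℝ V]

noncomputable def minusRoot (B : LinearMap.BilinForm ℝ V) (v w : V) : ℝ :=
  (-B v w - √(B v w ^ 2 - B v v * B w w)) / B w w

variable {B : LinearMap.BilinForm ℝ V}

theorem IsSymm.apply_add_smul_self (hB : B.IsSymm) (v w : V) (x : ℝ) :
    B (v + x • w) (v + x • w) = B v v + 2 * B v w * x + B w w * x ^ 2 := by
  simp only [map_add, map_smul, LinearMap.add_apply, LinearMap.smul_apply, smul_eq_mul,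
    hB.eq w v]
  ring

theorem minusRoot_eq_of_isotropic (hB : B.IsSymm) {v w : V} {x : ℝ} (hw : B w w ≠ 0)
    (hiso : B (v + x • w) (v + x • w) = 0) (hneg : B (v + x • w) w < 0) :
    B.minusRoot v w = x := by
  refine neg_sub_sqrt_div_eq_of_root hw (by rwa [← hB.apply_add_smul_self]) ?_
  simpa [mul_comm] using hneg

theorem apply_add_minusRoot_smul (hB : B.IsSymm) {v w : V} (hw : B w w ≠ 0)
    (hdisc : 0 < B v w ^ 2 - B v v * B w w) :
    B (v + B.minusRoot v w • w) (v + B.minusRoot v w • w) = 0 ∧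
      B (v + B.minusRoot v w • w) w = -√(B v w ^ 2 - B v v * B w w) := by
  set D := B v w ^ 2 - B v v * B w w
  have hroot : B.minusRoot v w * B w w = -B v w - √D := by
    rw [minusRoot, div_mul_cancel₀ _ hw]
  have hsq : √D ^ 2 = D := Real.sq_sqrt hdisc.le
  constructor
  · rw [hB.apply_add_smul_self]
    refine (mul_eq_zero.mp ?_).resolve_left hw
    linear_combination (B.minusRoot v w * B w w + B v w - √D) * hroot + hsq
  · simp only [map_add, map_smul, LinearMap.add_apply, LinearMap.smul_apply, smul_eq_mul]
    linear_combination hroot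

theorem eventually_minusRoot_add_smul_eq (hB : B.IsSymm) {v w : V} (e : V) (hw : B w w ≠ 0)
    (hdisc : 0 < B v w ^ 2 - B v v * B w w) :
    ∀ᶠ t in 𝓝 (0 : ℝ),
      B.minusRoot (v + t • (-B.minusRoot v w • e)) (w + t • e) = B.minusRoot v w := by
  obtain ⟨hiso, hneg⟩ := apply_add_minusRoot_smul hB hw hdisc
  set x := B.minusRoot v w
  have hshift : ∀ t : ℝ, v + t • (-x • e) + x • (w + t • e) = v + x • w := by
    intro t; module
  have hww : ∀ᶠ t in 𝓝 (0 : ℝ), B (w + t • e) (w + t • e) ≠ 0 := by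
    have : Continuous fun t : ℝ => B (w + t • e) (w + t • e) := by
      simp only [map_add, map_smul, LinearMap.add_apply, LinearMap.smul_apply, smul_eq_mul]
      fun_prop
    exact this.continuousAt.eventually_ne (by simpa using hw)
  have hlt : ∀ᶠ t in 𝓝 (0 : ℝ), B (v + x • w) (w + t • e) < 0 := by
    have : Continuous fun t : ℝ => B (v + x • w) (w + t • e) := by
      simp only [map_add, map_smul, smul_eq_mul]; fun_prop
    exact this.continuousAt.eventually_lt continuousAt_const
      (by simpa only [zero_smul, add_zero, hneg, Left.neg_neg_iff] using Real.sqrt_pos.mpr hdisc)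
  filter_upwards [hww, hlt] with t ht hneg_t
  exact minusRoot_eq_of_isotropic hB ht (by rw [hshift, hiso]) (by rwa [hshift])

end LinearMap.BilinForm

theorem spInner_comm (u v : Fin 4 → ℝ) : spInner u v = spInner v u :=
  Finset.sum_congr rfl fun _ _ => mul_comm _ _

theorem spInner_add_left (u v w : Fin 4 → ℝ) : spInner (u + v) w = spInner u w + spInner v w := by
  simp only [spInner, Pi.add_apply, add_mul, Finset.sum_add_distrib]

theorem spInner_smul_left (c : ℝ) (v w : Fin 4 → ℝ) : spInner (c • v) w = c * spInner v w := by
  simp only [spInner, Pi.smul_apply, smul_eq_mul, mul_assoc, Finset.mul_sum]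

theorem spInner_add_right (u v w : Fin 4 → ℝ) : spInner u (v + w) = spInner u v + spInner u w := by
  simp only [spInner_comm u, spInner_add_left]

theorem spInner_smul_right (c : ℝ) (u w : Fin 4 → ℝ) : spInner u (c • w) = c * spInner u w := by
  simp only [spInner_comm u, spInner_smul_left]

noncomputable def schwBilin (m : ℝ) (u : Fin 4 → ℝ) : LinearMap.BilinForm ℝ (Fin 4 → ℝ) :=
  LinearMap.mk₂ ℝ (schwForm m u)
    (fun _ _ _ => by
      simp only [schwForm, spInner_add_left, spInner_add_right, Pi.add_apply]; ring)
    (fun _ _ _ => by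
      simp only [schwForm, spInner_smul_left, spInner_smul_right, Pi.smul_apply, smul_eq_mul]
      ring)
    (fun _ _ _ => by simp only [schwForm, spInner_add_right, Pi.add_apply]; ring)
    (fun _ _ _ => by simp only [schwForm, spInner_smul_right, Pi.smul_apply, smul_eq_mul]; ring)

theorem schwBilin_isSymm (m : ℝ) (u : Fin 4 → ℝ) : (schwBilin m u).IsSymm := by
  refine ⟨fun v w => ?_⟩
  simp only [schwBilin, LinearMap.mk₂_apply, schwForm, spInner_comm v w]
  ring

theorem lamMinus_eq_minusRoot (m : ℝ) (U : (Fin 4 → ℝ) × (Fin 4 → ℝ) × (Fin 4 → ℝ)) :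
    lamMinus m U = (schwBilin m U.1).minusRoot U.2.1 U.2.2 :=
  rfl

theorem lamMinus_linearly_degenerate_general
    (m : ℝ)
    (U : (Fin 4 → ℝ) × (Fin 4 → ℝ) × (Fin 4 → ℝ))
    (hg11 : g11 m U ≠ 0)
    (hdisc : g00 m U * g11 m U - (g01 m U) ^ 2 < 0)
    (i : Fin 4) :
    fderiv ℝ (lamMinus m) U
      ((0 : Fin 4 → ℝ), -(lamMinus m U) • (Pi.single i 1 : Fin 4 → ℝ), (Pi.single i 1 : Fin 4 → ℝ)) = 0 := by
  apply fderiv_apply_eq_zero_of_eventually_const_on_line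
  have hconst := (schwBilin m U.1).eventually_minusRoot_add_smul_eq (schwBilin_isSymm m U.1)
    (v := U.2.1) (Pi.single i 1) hg11 (sub_pos.mpr (sub_neg.mp hdisc))
  filter_upwards [hconst] with t ht
  simpa only [lamMinus_eq_minusRoot, Prod.fst_add, Prod.snd_add, Prod.smul_fst, Prod.smul_snd,
    smul_zero, add_zero] using ht

/-- Linear degeneracy of the `λ₋` characteristic field: the gradient of `λ₋`
annihilates each right eigenvector `r_i = (0, -λ₋ e_i, e_i)`. -/
theorem lamMinus_linearly_degenerate
    (m : ℝ) (hm : 0 < m)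
    (U : (Fin 4 → ℝ) × (Fin 4 → ℝ) × (Fin 4 → ℝ))
    (hr : 2 * m < spNorm U.1)
    (hg11 : g11 m U ≠ 0)
    (hdisc : g00 m U * g11 m U - (g01 m U) ^ 2 < 0)
    (i : Fin 4) :
    fderiv ℝ (lamMinus m) U
      ((0 : Fin 4 → ℝ), -(lamMinus m U) • (Pi.single i 1 : Fin 4 → ℝ), (Pi.single i 1 : Fin 4 → ℝ)) = 0 :=
  lamMinus_linearly_degenerate_general m U hg11 hdisc i
end

section
/- Let $\lambda_\pm : \mathbb{R}^+ \times \mathbb{R} \to \mathbb{R}$ be $C^1$ functions satisfying the system $\partial_t \lambda_- + \lambda_+ \partial_\theta \lambda_- = 0$ and $\partial_t \lambda_+ + \lambda_- \partial_\theta \lambda_+ = 0$, with $\lambda_+(t,\theta) > \lambda_-(t,\theta)$ everywhere. Then the conservation-law identity $\partial_t\left(\dfrac{2}{\lambda_+ - \lambda_-}\right) + \partial_\theta\left(\dfrac{\lambda_+ + \lambda_-}{\lambda_+ - \lambda_-}\right) = 0$ holds. -/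
theorem fderiv_fun_div_apply {𝕜 E : Type*} [NontriviallyNormedField 𝕜] [NormedAddCommGroup E]
    [NormedSpace 𝕜 E] {c d : E → 𝕜} {x : E} (hc : DifferentiableAt 𝕜 c x)
    (hd : DifferentiableAt 𝕜 d x) (hx : d x ≠ 0) (v : E) :
    fderiv 𝕜 (fun y => c y / d y) x v
      = (fderiv 𝕜 c x v * d x - c x * fderiv 𝕜 d x v) / d x ^ 2 := by
  have hinv : HasFDerivAt (fun y => (d y)⁻¹) ((-(d x ^ 2)⁻¹) • fderiv 𝕜 d x) x :=
    (hasDerivAt_inv hx).comp_hasFDerivAt x hd.hasFDerivAt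
  simp only [div_eq_mul_inv]
  rw [(hc.hasFDerivAt.fun_mul hinv).fderiv]
  simp only [add_apply, smul_apply, smul_eq_mul]
  field_simp
  ring

/-- The conservation-law identity (4.16): if `λ₋, λ₊` satisfy
`∂_t λ₋ + λ₊ ∂_θ λ₋ = 0` and `∂_t λ₊ + λ₋ ∂_θ λ₊ = 0` with `λ₊ > λ₋` on
`ℝ⁺ × ℝ`, then `∂_t (2/(λ₊-λ₋)) + ∂_θ ((λ₊+λ₋)/(λ₊-λ₋)) = 0`. -/
theorem conservation_identity
    (lamP lamM : ℝ × ℝ → ℝ)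
    (hdiffP : ∀ p : ℝ × ℝ, 0 < p.1 → DifferentiableAt ℝ lamP p)
    (hdiffM : ∀ p : ℝ × ℝ, 0 < p.1 → DifferentiableAt ℝ lamM p)
    (hsep : ∀ p : ℝ × ℝ, 0 < p.1 → lamM p < lamP p)
    (heqM : ∀ p : ℝ × ℝ, 0 < p.1 →
      fderiv ℝ lamM p (1, 0) + lamP p * fderiv ℝ lamM p (0, 1) = 0)
    (heqP : ∀ p : ℝ × ℝ, 0 < p.1 →
      fderiv ℝ lamP p (1, 0) + lamM p * fderiv ℝ lamP p (0, 1) = 0) :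
    ∀ p : ℝ × ℝ, 0 < p.1 →
      fderiv ℝ (fun q => 2 / (lamP q - lamM q)) p (1, 0)
        + fderiv ℝ (fun q => (lamP q + lamM q) / (lamP q - lamM q)) p (0, 1) = 0 := by
  intro p hp
  have hP := hdiffP p hp
  have hM := hdiffM p hp
  have hne : lamP p - lamM p ≠ 0 := sub_ne_zero.mpr (hsep p hp).ne'
  rw [fderiv_fun_div_apply (differentiableAt_const 2) (hP.fun_sub hM) hne,
    fderiv_fun_div_apply (hP.fun_add hM) (hP.fun_sub hM) hne,
    fderiv_fun_sub hP hM, fderiv_fun_add hP hM, fderiv_const_apply]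
  simp only [zero_apply, add_apply, sub_apply]
  field_simp
  -- the common numerator is `2 ((∂ₜλ₋ + λ₊ ∂_θλ₋) - (∂ₜλ₊ + λ₋ ∂_θλ₊))`
  linear_combination 2 * heqM p hp - 2 * heqP p hp
end
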